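/- arXiv:2410.00705 — 2 statements merged into one kernel-verified Lean document; each statement's English description precedes it below -/
import Mathlib

section
/- Given factor price changes Ŵ = Λ̄̂ + 1_F M̂ - L̄̂ (changes in expenditure-based factor shares, money supply, and factor supplies), budget identity M + T = nGDP with d(nGDP)/nGDP = (M/nGDP)M̂ + dT/nGDP, and Λ̄ᵀ1_F = (M+T)/M so that 1_Fᵀ dΛ̄ = dT/M - (T/M)M̂, the CPI formula P̂ = -(λ̄ᵀ - λ̃ᵀ)Ẑ + (Λ̄ᵀ - Λ̃ᵀ)Ŵ + (b̄_Mᵀ + b̃_Mᵀ)P̂_M is equivalent to P̂ = -(λ̄ᵀ - λ̃ᵀ)Ẑ - Λ̃ᵀ Λ̄̂ - (Λ̄ᵀ - Λ̃ᵀ)L̄̂ + dT/M + (1 - Λ̃ᵀ1_F)M̂ + (b̄_Mᵀ + b̃_Mᵀ)P̂_M, where Λ̃ᵀ = x̄ᵀΨA and Λ̄̂ denotes the vector of log-changes in factor shares weighted so that Λ̄ᵀΛ̄̂ = 1_FᵀdΛ̄. -/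
open Matrix

/-! Substituting `W = Λ̄̂ + 1 M̂ - L̄̂` splits `(Λ̄ - Λ̃)ᵀ W` into a `Λ̄ᵀ` part and a `Λ̃ᵀ` part.
The budget identities evaluate the `Λ̄ᵀ` part: `Λ̄ᵀ Λ̄̂ + (Λ̄ᵀ 1) M̂ = dT/M - (T/M) M̂ + ((M+T)/M) M̂
= dT/M + M̂`, which leaves exactly the terms of the second CPI formula. -/

theorem dotProduct_const_right {ι α : Type*} [Fintype ι] [CommSemiring α] (v : ι → α) (c : α) :
    v ⬝ᵥ (fun _ => c) = (v ⬝ᵥ fun _ => 1) * c := by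
  simp [dotProduct, Finset.sum_mul]

theorem dotProduct_add_const_of_budget {ι : Type*} [Fintype ι] (Lam Lamhat : ι → ℝ)
    {Mny T dT Mhat : ℝ} (hM : Mny ≠ 0)
    (hsum : Lam ⬝ᵥ (fun _ => (1 : ℝ)) = (Mny + T) / Mny)
    (hdsum : Lam ⬝ᵥ Lamhat = dT / Mny - (T / Mny) * Mhat) :
    Lam ⬝ᵥ (Lamhat + fun _ => Mhat) = dT / Mny + Mhat := by
  rw [dotProduct_add, hdsum, dotProduct_const_right, hsum]
  field_simp
  ring

theorem sub_dotProduct_add_const_sub {ι : Type*} [Fintype ι] (Lam Lt Lamhat Lhat : ι → ℝ)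
    (c : ℝ) :
    (Lam - Lt) ⬝ᵥ (Lamhat + (fun _ => c) - Lhat)
      = Lam ⬝ᵥ (Lamhat + fun _ => c) - Lt ⬝ᵥ Lamhat - (Lt ⬝ᵥ fun _ => 1) * c
        - (Lam - Lt) ⬝ᵥ Lhat := by
  rw [dotProduct_sub, sub_dotProduct, dotProduct_add Lt, dotProduct_const_right]
  ring

theorem cpi_factor_quantities_general {n m f : ℕ}
    (Ψ : Matrix (Fin n) (Fin n) ℝ) (A : Matrix (Fin n) (Fin f) ℝ)
    (lam x Z : Fin n → ℝ) (Lam Lamhat Lhat W : Fin f → ℝ)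
    (bM bMt PM : Fin m → ℝ)
    (Mny T dT Mhat : ℝ) (hM : Mny ≠ 0)
    (hW : W = Lamhat + (fun _ => Mhat) - Lhat)
    (hsum : Lam ⬝ᵥ (fun _ => (1 : ℝ)) = (Mny + T) / Mny)
    (hdsum : Lam ⬝ᵥ Lamhat = dT / Mny - (T / Mny) * Mhat) :
    -((lam - x ᵥ* Ψ) ⬝ᵥ Z) + ((Lam - (x ᵥ* Ψ) ᵥ* A) ⬝ᵥ W) + ((bM + bMt) ⬝ᵥ PM)
      = -((lam - x ᵥ* Ψ) ⬝ᵥ Z) - (((x ᵥ* Ψ) ᵥ* A) ⬝ᵥ Lamhat)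
        - ((Lam - (x ᵥ* Ψ) ᵥ* A) ⬝ᵥ Lhat) + dT / Mny
        + (1 - ((x ᵥ* Ψ) ᵥ* A) ⬝ᵥ (fun _ => (1 : ℝ))) * Mhat
        + ((bM + bMt) ⬝ᵥ PM) := by
  rw [hW, sub_dotProduct_add_const_sub, dotProduct_add_const_of_budget Lam Lamhat hM hsum hdsum]
  ring

/-- Proposition 3: equivalence of the CPI formula in terms of factor prices with
the formula in terms of money supply, transfers, factor supplies and factor-share
reallocation. -/
theorem cpi_factor_quantities {n m f : ℕ}
    (Ψ : Matrix (Fin n) (Fin n) ℝ) (A : Matrix (Fin n) (Fin f) ℝ)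
    (Γ : Matrix (Fin n) (Fin m) ℝ)
    (lam x bD Z : Fin n → ℝ) (Lam Lamhat Lhat W : Fin f → ℝ)
    (bM bMt PM : Fin m → ℝ)
    (Mny T dT Mhat : ℝ) (hM : Mny ≠ 0)
    (hbMt : bMt = (bD ᵥ* Ψ) ᵥ* Γ)
    (hW : W = Lamhat + (fun _ => Mhat) - Lhat)
    (hsum : Lam ⬝ᵥ (fun _ => (1 : ℝ)) = (Mny + T) / Mny)
    (hdsum : Lam ⬝ᵥ Lamhat = dT / Mny - (T / Mny) * Mhat) :
    -((lam - x ᵥ* Ψ) ⬝ᵥ Z) + ((Lam - (x ᵥ* Ψ) ᵥ* A) ⬝ᵥ W) + ((bM + bMt) ⬝ᵥ PM)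
      = -((lam - x ᵥ* Ψ) ⬝ᵥ Z) - (((x ᵥ* Ψ) ᵥ* A) ⬝ᵥ Lamhat)
        - ((Lam - (x ᵥ* Ψ) ᵥ* A) ⬝ᵥ Lhat) + dT / Mny
        + (1 - ((x ᵥ* Ψ) ᵥ* A) ⬝ᵥ (fun _ => (1 : ℝ))) * Mhat
        + ((bM + bMt) ⬝ᵥ PM) :=
  cpi_factor_quantities_general Ψ A lam x Z Lam Lamhat Lhat W bM bMt PM Mny T dT Mhat hM hW hsum
    hdsum
end

section
/- In the three-sector model with labor the only factor, if the zero-profit relation 1 = Ψa + ΨΓ1 holds rowwise, λᵀ = b_TᵀΨ_T, and λᵀa = 1 (full labor income), then the CPI change satisfies d log CPI = (1 - b_Tᵀ(Ψ_T - Ψ)a) d log W + b_Tᵀ(Ψ_T - Ψ)a · d log P_M - (λᵀ - b_Tᵀ(Ψ_T - Ψ)) d log Z, given d log CPI = b_Tᵀ d log P + b_M(d log P_M - d log P_X) with d log P = Ψa d log W + ΨΓ d log P_M - Ψ d log Z and d log P_M = d log P_X (constant relative world prices). -/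
/-!
With labor the only factor, zero profits give `Ψ Γ = 1 - Ψ a`, so the import price enters the CPI
with weight `1 - b_Tᵀ Ψ a`; full labor income `b_Tᵀ Ψ_T a = 1` rewrites this weight as
`b_Tᵀ (Ψ_T - Ψ) a`.
-/

open Matrix

section CPI

variable {ι : Type*} [Fintype ι] (Ψ ΨT : Matrix ι ι ℝ) (a b : ι → ℝ)

theorem dotProduct_sub_mulVec_eq_one_sub (hfac : (b ᵥ* ΨT) ⬝ᵥ a = 1) :
    b ⬝ᵥ ((ΨT - Ψ) *ᵥ a) = 1 - b ⬝ᵥ (Ψ *ᵥ a) := by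
  rw [sub_mulVec, dotProduct_sub, dotProduct_mulVec, hfac]

theorem dotProduct_priceChange_of_zeroProfit (Γ dZ : ι → ℝ) (dW dPM : ℝ)
    (hzp : 1 = Ψ *ᵥ a + Ψ *ᵥ Γ) (hbsum : b ⬝ᵥ 1 = 1) :
    b ⬝ᵥ (dW • (Ψ *ᵥ a) + dPM • (Ψ *ᵥ Γ) - Ψ *ᵥ dZ)
      = dW * (b ⬝ᵥ (Ψ *ᵥ a)) + dPM * (1 - b ⬝ᵥ (Ψ *ᵥ a)) - (b ᵥ* Ψ) ⬝ᵥ dZ := by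
  have hΓ : Ψ *ᵥ Γ = 1 - Ψ *ᵥ a := eq_sub_of_add_eq' hzp.symm
  rw [hΓ, dotProduct_sub, dotProduct_add, dotProduct_smul, dotProduct_smul, dotProduct_sub,
    hbsum, dotProduct_mulVec b Ψ dZ, smul_eq_mul, smul_eq_mul]

end CPI

/-- CPI changes in the three-sector model with labor the only factor. -/
theorem three_sector_cpi
    (Ψ ΨT : Matrix (Fin 2) (Fin 2) ℝ)
    (a bT Γ lam dZ dP : Fin 2 → ℝ)
    (dW dPM dPX bMshare dCPI : ℝ)
    (hzp : (fun _ => (1 : ℝ)) = Ψ *ᵥ a + Ψ *ᵥ Γ)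
    (hlam : lam = bT ᵥ* ΨT)
    (hfac : lam ⬝ᵥ a = 1)
    (hbsum : bT ⬝ᵥ (fun _ => (1 : ℝ)) = 1)
    (hP : dP = dW • (Ψ *ᵥ a) + dPM • (Ψ *ᵥ Γ) - Ψ *ᵥ dZ)
    (hCPI : dCPI = bT ⬝ᵥ dP + bMshare * (dPM - dPX))
    (hrel : dPM = dPX) :
    dCPI = (1 - bT ⬝ᵥ ((ΨT - Ψ) *ᵥ a)) * dW
      + (bT ⬝ᵥ ((ΨT - Ψ) *ᵥ a)) * dPM
      - (lam - bT ᵥ* (ΨT - Ψ)) ⬝ᵥ dZ := by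
  subst hlam hP hCPI hrel
  rw [dotProduct_priceChange_of_zeroProfit Ψ a bT Γ dZ dW dPM hzp hbsum,
    dotProduct_sub_mulVec_eq_one_sub Ψ ΨT a bT hfac, vecMul_sub, sub_sub_cancel (bT ᵥ* ΨT)]
  ring
end
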